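/- Let f₀ : Γ(E₀') → Γ(E₀) be the C^∞(ℝ²)-linear map determined by f₀(Y₁¹) = X₁¹, f₀(Y₂²) = X₂², f₀(𝒴₁) = 𝒳₁, f₀(𝒴₂) = 𝒳₂. Then f₀ is a morphism of almost Lie algebroids over the identity of ℝ²: ρ(f₀(U)) = ρ'(U) and f₀([U,V]_{E₀'}) = [f₀(U), f₀(V)]_{E₀} for all sections U, V of E₀'. -/

import Mathlib

noncomputable section

set_option maxHeartbeats 1000000
set_option synthInstance.maxHeartbeats 400000

open Matrix

/-- The ℝ-algebra of smooth (C^∞) functions on ℝ². -/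
def Sm : Subalgebra ℝ ((ℝ × ℝ) → ℝ) where
  carrier := {f | ContDiff ℝ (⊤ : ℕ∞) f}
  mul_mem' := fun {a b} (hf : ContDiff ℝ (⊤ : ℕ∞) a) (hg : ContDiff ℝ (⊤ : ℕ∞) b) => hf.mul hg
  add_mem' := fun {a b} (hf : ContDiff ℝ (⊤ : ℕ∞) a) (hg : ContDiff ℝ (⊤ : ℕ∞) b) => hf.add hg
  algebraMap_mem' r :=
    show ContDiff ℝ (⊤ : ℕ∞) (algebraMap ℝ ((ℝ × ℝ) → ℝ) r) from contDiff_const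

/-- Smooth functions on the plane. -/
abbrev S : Type := Sm

lemma mem_Sm_iff {f : (ℝ × ℝ) → ℝ} : f ∈ Sm ↔ ContDiff ℝ (⊤ : ℕ∞) f := by
  rw [Sm]; rfl

lemma smooth_coe (f : S) : ContDiff ℝ (⊤ : ℕ∞) (f : (ℝ × ℝ) → ℝ) := mem_Sm_iff.mp f.2

/-- Sections of the trivial bundle `ℝ² × M₂(ℝ)`, as 2×2 matrices of smooth functions. -/
abbrev E₀ : Type := Matrix (Fin 2) (Fin 2) S

/-- The section `X_j^i`: the constant elementary matrix with 1 in entry (i,j). -/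
def sb (i j : Fin 2) : E₀ := Matrix.single i j 1

/-- First coordinate function. -/
def x₁ : S := ⟨fun p => p.1, mem_Sm_iff.mpr contDiff_fst⟩
/-- Second coordinate function. -/
def x₂ : S := ⟨fun p => p.2, mem_Sm_iff.mpr contDiff_snd⟩
/-- Coordinates. -/
def xc : Fin 2 → S := ![x₁, x₂]

/-- Directional derivative of a smooth function, in direction `v`. -/
def pdAux (v : ℝ × ℝ) (f : S) : S :=
  ⟨fun p => fderiv ℝ (f : (ℝ × ℝ) → ℝ) p v,
    mem_Sm_iff.mpr (((smooth_coe f).fderiv_right (le_refl _)).clm_apply contDiff_const)⟩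

/-- The vector field (derivation) `∂/∂v` on `ℝ²`. -/
def pd (v : ℝ × ℝ) : Derivation ℝ S S where
  toFun := pdAux v
  map_add' f g := by
    ext p
    have hf : DifferentiableAt ℝ (f : (ℝ × ℝ) → ℝ) p :=
      ((smooth_coe f).differentiable (by simp)).differentiableAt
    have hg : DifferentiableAt ℝ (g : (ℝ × ℝ) → ℝ) p :=
      ((smooth_coe g).differentiable (by simp)).differentiableAt
    have h1 : ((f + g : S) : (ℝ × ℝ) → ℝ) = fun q => (f : (ℝ × ℝ) → ℝ) q + (g : (ℝ × ℝ) → ℝ) q := rfl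
    simp only [pdAux, h1, AddMemClass.coe_add, Pi.add_apply]
    rw [fderiv_fun_add hf hg]
    simp
  map_smul' c f := by
    ext p
    have h1 : ((c • f : S) : (ℝ × ℝ) → ℝ) = fun q => c * (f : (ℝ × ℝ) → ℝ) q := rfl
    have hf : DifferentiableAt ℝ (f : (ℝ × ℝ) → ℝ) p :=
      ((smooth_coe f).differentiable (by simp)).differentiableAt
    simp only [pdAux]
    rw [h1, fderiv_const_mul hf]
    simp
  map_one_eq_zero' := by
    ext p
    have h1 : ((1 : S) : (ℝ × ℝ) → ℝ) = fun _ => (1 : ℝ) := rfl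
    have h2 : fderiv ℝ (1 : (ℝ × ℝ) → ℝ) p = 0 := fderiv_const_apply 1
    simp [pdAux, h1, h2]
  leibniz' f g := by
    ext p
    have hf : DifferentiableAt ℝ (f : (ℝ × ℝ) → ℝ) p :=
      ((smooth_coe f).differentiable (by simp)).differentiableAt
    have hg : DifferentiableAt ℝ (g : (ℝ × ℝ) → ℝ) p :=
      ((smooth_coe g).differentiable (by simp)).differentiableAt
    have h1 : ((f * g : S) : (ℝ × ℝ) → ℝ) = fun q => (f : (ℝ × ℝ) → ℝ) q * (g : (ℝ × ℝ) → ℝ) q := rfl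
    simp [pdAux, h1, fderiv_fun_mul hf hg]
    try ring

/-- Standard basis vectors of ℝ². -/
def ev : Fin 2 → ℝ × ℝ := ![(1, 0), (0, 1)]

/-- The anchor `ρ` of `E₀`: `ρ(X_j^i) = (x^i)² ∂/∂x^j`, extended `C^∞(ℝ²)`-linearly. -/
def anchor (X : E₀) : Derivation ℝ S S :=
  ∑ i : Fin 2, ∑ j : Fin 2, (X i j * xc i ^ 2) • pd (ev j)

/-- The section `𝒳₁ = (x²)² X₁¹ − (x¹)² X₁²`. -/
def 𝓧₁ : E₀ := x₂ ^ 2 • sb 0 0 - x₁ ^ 2 • sb 1 0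
/-- The section `𝒳₂ = (x²)² X₂¹ − (x¹)² X₂²`. -/
def 𝓧₂ : E₀ := x₂ ^ 2 • sb 0 1 - x₁ ^ 2 • sb 1 1

/-- The almost Lie bracket axioms for `(E₀, ρ)`, together with the defining values
`[X_j^i, X_l^k] = 2x^k δ_j^k X_l^i − 2x^i δ_l^i X_j^k` on the generators: ℝ-bilinearity,
skew-symmetry, the Leibniz rule, and the values on generators. -/
def IsBracket (L : E₀ → E₀ → E₀) : Prop :=
  (∀ X X' Y, L (X + X') Y = L X Y + L X' Y) ∧
  (∀ X Y Y', L X (Y + Y') = L X Y + L X Y') ∧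
  (∀ (c : ℝ) (X Y : E₀), L (c • X) Y = c • L X Y) ∧
  (∀ (c : ℝ) (X Y : E₀), L X (c • Y) = c • L X Y) ∧
  (∀ X Y, L Y X = - L X Y) ∧
  (∀ (f : S) (X Y : E₀), L X (f • Y) = anchor X f • Y + f • L X Y) ∧
  (∀ i j k l, L (sb i j) (sb k l) =
    (if j = k then (2 : S) * xc k else 0) • sb i l
      - (if l = i then (2 : S) * xc i else 0) • sb k j)


/-- Sections of the trivial bundle `ℝ² × ℝ⁴`. -/
abbrev E₀' : Type := Fin 4 → S

/-- The generator `Y₁¹`. -/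
def Y₁₁ : E₀' := Pi.single 0 1
/-- The generator `Y₂²`. -/
def Y₂₂ : E₀' := Pi.single 1 1
/-- The generator `𝒴₁`. -/
def 𝓨₁ : E₀' := Pi.single 2 1
/-- The generator `𝒴₂`. -/
def 𝓨₂ : E₀' := Pi.single 3 1

/-- The anchor `ρ'` of `E₀'`: `ρ'(Y₁¹) = (x¹)² ∂/∂x¹`, `ρ'(Y₂²) = (x²)² ∂/∂x²`,
`ρ'(𝒴₁) = ρ'(𝒴₂) = 0`, extended `C^∞(ℝ²)`-linearly. -/
def anchor' (u : E₀') : Derivation ℝ S S :=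
  (u 0 * x₁ ^ 2) • pd (ev 0) + (u 1 * x₂ ^ 2) • pd (ev 1)

/-- The map `f₀ : Γ(E₀') → Γ(E₀)` with `f₀(Y₁¹) = X₁¹`, `f₀(Y₂²) = X₂²`, `f₀(𝒴₁) = 𝒳₁`,
`f₀(𝒴₂) = 𝒳₂`, extended `C^∞(ℝ²)`-linearly. -/
def f₀ (u : E₀') : E₀ := u 0 • sb 0 0 + u 1 • sb 1 1 + u 2 • 𝓧₁ + u 3 • 𝓧₂

/-!
For an `A`-linear map `φ` intertwining the anchors, the defect `φ [u, v]' - [φ u, φ v]` is skew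
and `A`-linear in `v`: the anchor terms of the two Leibniz rules cancel. Hence it is
`A`-bilinear, and it vanishes as soon as it vanishes on the pairs `(bᵢ, bⱼ)`, `i < j`, of a
basis. For `f₀` and the basis `Y₁¹, Y₂², 𝒴₁, 𝒴₂` these are six explicit computations in `E₀`,
using the Leibniz rule and `∂ⱼ (xⁱ)² = 2 δᵢⱼ xⁱ`.
-/

section AlmostLieBracket

variable {k A M : Type*} [CommRing k] [CommRing A] [Algebra k A] [AddCommGroup M] [Module A M]

/-- The other axioms of an almost Lie bracket (additivity and the Leibniz rule in the first
argument, `k`-bilinearity) follow from these three. -/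
structure IsAlmostLieBracket (ρ : M → Derivation k A A) (L : M → M → M) : Prop where
  add_right : ∀ X Y Y', L X (Y + Y') = L X Y + L X Y'
  skew : ∀ X Y, L Y X = -L X Y
  leibniz : ∀ (f : A) X Y, L X (f • Y) = ρ X f • Y + f • L X Y

namespace IsAlmostLieBracket

variable {ρ : M → Derivation k A A} {L : M → M → M}

theorem sub_right (hL : IsAlmostLieBracket ρ L) (X Y Z : M) :
    L X (Y - Z) = L X Y - L X Z :=
  map_sub (AddMonoidHom.mk' (L X) (hL.add_right X)) Y Z

theorem sub_left (hL : IsAlmostLieBracket ρ L) (X Y Z : M) :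
    L (X - Y) Z = L X Z - L Y Z := by
  rw [hL.skew, hL.sub_right, hL.skew Z X, hL.skew Z Y, neg_sub_neg, neg_sub]

theorem smul_left (hL : IsAlmostLieBracket ρ L) (f : A) (X Y : M) :
    L (f • X) Y = f • L X Y - ρ Y f • X := by
  rw [hL.skew, hL.leibniz, hL.skew Y X]
  module

end IsAlmostLieBracket

end AlmostLieBracket

section BracketDefect

variable {k A M M' ι : Type*} [CommRing k] [CommRing A] [Algebra k A]
  [AddCommGroup M] [Module A M] [AddCommGroup M'] [Module A M']
  {ρ : M → Derivation k A A} {L : M → M → M} {ρ' : M' → Derivation k A A} {L' : M' → M' → M'}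

def bracketDefect (L : M → M → M) (L' : M' → M' → M') (φ : M' → M) (u v : M') : M :=
  φ (L' u v) - L (φ u) (φ v)

variable (hL : IsAlmostLieBracket ρ L) (hL' : IsAlmostLieBracket ρ' L') (φ : M' →ₗ[A] M)
include hL hL'

theorem bracketDefect_skew (u v : M') :
    bracketDefect L L' φ v u = -bracketDefect L L' φ u v := by
  simp only [bracketDefect, hL.skew (φ u), hL'.skew u, map_neg]
  abel

theorem bracketDefect_add_right (u v v' : M') :
    bracketDefect L L' φ u (v + v') = bracketDefect L L' φ u v + bracketDefect L L' φ u v' := by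
  simp only [bracketDefect, hL'.add_right, map_add, hL.add_right]
  abel

variable {φ} (hφ : ∀ u, ρ (φ u) = ρ' u)
include hφ

theorem bracketDefect_smul_right (f : A) (u v : M') :
    bracketDefect L L' φ u (f • v) = f • bracketDefect L L' φ u v := by
  simp only [bracketDefect, hL'.leibniz, map_add, map_smul, hL.leibniz, hφ]
  module

def bracketDefectₗ : M' →ₗ[A] M' →ₗ[A] M :=
  LinearMap.mk₂ A (bracketDefect L L' φ)
    (fun u u' v => by
      rw [bracketDefect_skew hL hL', bracketDefect_add_right hL hL', neg_add,
        ← bracketDefect_skew hL hL', ← bracketDefect_skew hL hL'])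
    (fun f u v => by
      rw [bracketDefect_skew hL hL', bracketDefect_smul_right hL hL' hφ, ← smul_neg,
        ← bracketDefect_skew hL hL'])
    (bracketDefect_add_right hL hL' φ)
    (bracketDefect_smul_right hL hL' hφ)

theorem map_bracket_of_basis (b : Module.Basis ι A M')
    (hb : ∀ i j, φ (L' (b i) (b j)) = L (φ (b i)) (φ (b j))) (u v : M') :
    φ (L' u v) = L (φ u) (φ v) := by
  have hzero : bracketDefectₗ hL hL' hφ = 0 :=
    LinearMap.ext_basis b b fun i j => sub_eq_zero.mpr (hb i j)
  exact sub_eq_zero.mp (LinearMap.congr_fun₂ hzero u v)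

theorem map_bracket_of_basis_of_lt [LinearOrder ι] [IsAddTorsionFree M]
    (b : Module.Basis ι A M')
    (hb : ∀ i j, i < j → φ (L' (b i) (b j)) = L (φ (b i)) (φ (b j))) (u v : M') :
    φ (L' u v) = L (φ u) (φ v) := by
  refine map_bracket_of_basis hL hL' hφ b (fun i j => ?_) u v
  rw [← sub_eq_zero]
  change bracketDefect L L' φ (b i) (b j) = 0
  rcases lt_trichotomy i j with hij | rfl | hji
  · exact sub_eq_zero.mpr (hb i j hij)
  · exact self_eq_neg.mp (bracketDefect_skew hL hL' φ (b i) (b i))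
  · rw [bracketDefect_skew hL hL', neg_eq_zero]
    exact sub_eq_zero.mpr (hb j i hji)

end BracketDefect

instance : IsAddTorsionFree E₀ := .of_module_rat E₀

lemma pd_xc (i j : Fin 2) : pd (ev j) (xc i) = if i = j then 1 else 0 := by
  fin_cases i <;> fin_cases j <;>
  · ext p
    show fderiv ℝ _ p _ = _
    simp [xc, x₁, x₂, ev]
    norm_num [fderiv_fst, fderiv_snd]

lemma pd_x₁ (j : Fin 2) : pd (ev j) x₁ = if 0 = j then 1 else 0 := pd_xc 0 j

lemma pd_x₂ (j : Fin 2) : pd (ev j) x₂ = if 1 = j then 1 else 0 := pd_xc 1 j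

lemma anchor_apply (X : E₀) (f : S) :
    anchor X f = ∑ i : Fin 2, ∑ j : Fin 2, X i j * xc i ^ 2 * pd (ev j) f := by
  simp [anchor]

lemma anchor_sb (i j : Fin 2) : anchor (sb i j) = xc i ^ 2 • pd (ev j) := by
  ext f
  rw [anchor_apply]
  fin_cases i <;> fin_cases j <;> simp [sb, Fin.sum_univ_two, Matrix.single]

lemma anchor_f₀ (u : E₀') : anchor (f₀ u) = anchor' u := by
  ext f
  simp [anchor_apply, anchor', f₀, 𝓧₁, 𝓧₂, sb, Matrix.single, Fin.sum_univ_two, xc]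
  ring

def f₀ₗ : E₀' →ₗ[S] E₀ where
  toFun := f₀
  map_add' u v := by simp only [f₀, Pi.add_apply, add_smul]; abel
  map_smul' f u := by simp only [f₀, Pi.smul_apply, smul_eq_mul, RingHom.id_apply]; module

lemma basisFun_eq_generators : ⇑(Pi.basisFun S (Fin 4)) = ![Y₁₁, Y₂₂, 𝓨₁, 𝓨₂] := by
  ext i : 1
  fin_cases i <;> simp [Y₁₁, Y₂₂, 𝓨₁, 𝓨₂]

lemma f₀ₗ_Y₁₁ : f₀ₗ Y₁₁ = sb 0 0 := by simp [f₀ₗ, f₀, Y₁₁]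

lemma f₀ₗ_Y₂₂ : f₀ₗ Y₂₂ = sb 1 1 := by simp [f₀ₗ, f₀, Y₂₂]

lemma f₀ₗ_𝓨₁ : f₀ₗ 𝓨₁ = 𝓧₁ := by simp [f₀ₗ, f₀, 𝓨₁]

lemma f₀ₗ_𝓨₂ : f₀ₗ 𝓨₂ = 𝓧₂ := by simp [f₀ₗ, f₀, 𝓨₂]

lemma anchor'_𝓨₂ : anchor' 𝓨₂ = 0 := by
  simp [anchor', 𝓨₂]

namespace IsBracket

variable {L : E₀ → E₀ → E₀} (hL : IsBracket L)
include hL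

theorem isAlmostLieBracket : IsAlmostLieBracket anchor L :=
  ⟨hL.2.1, hL.2.2.2.2.1, hL.2.2.2.2.2.1⟩

theorem bracket_sb_smul_sb (f : S) (i j k l : Fin 2) :
    L (sb i j) (f • sb k l) = (xc i ^ 2 * pd (ev j) f) • sb k l +
      f • ((if j = k then (2 : S) * xc k else 0) • sb i l
        - (if l = i then (2 : S) * xc i else 0) • sb k j) := by
  rw [hL.isAlmostLieBracket.leibniz, hL.2.2.2.2.2.2, anchor_sb, Derivation.smul_apply, smul_eq_mul]

theorem bracket_sb00_sb11 : L (sb 0 0) (sb 1 1) = 0 := by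
  simp [hL.2.2.2.2.2.2]

theorem bracket_sb00_𝓧₁ : L (sb 0 0) 𝓧₁ = 0 := by
  rw [𝓧₁, hL.isAlmostLieBracket.sub_right, hL.bracket_sb_smul_sb, hL.bracket_sb_smul_sb]
  simp [pd_x₁, pd_x₂, xc]
  module

theorem bracket_sb11_𝓧₂ : L (sb 1 1) 𝓧₂ = 0 := by
  rw [𝓧₂, hL.isAlmostLieBracket.sub_right, hL.bracket_sb_smul_sb, hL.bracket_sb_smul_sb]
  simp [pd_x₁, pd_x₂, xc]
  module

theorem bracket_sb00_𝓧₂ : L (sb 0 0) 𝓧₂ = ((2 : S) * x₁) • 𝓧₂ := by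
  rw [𝓧₂, hL.isAlmostLieBracket.sub_right, hL.bracket_sb_smul_sb, hL.bracket_sb_smul_sb]
  simp [pd_x₁, pd_x₂, xc]
  module

theorem bracket_sb11_𝓧₁ : L (sb 1 1) 𝓧₁ = ((2 : S) * x₂) • 𝓧₁ := by
  rw [𝓧₁, hL.isAlmostLieBracket.sub_right, hL.bracket_sb_smul_sb, hL.bracket_sb_smul_sb]
  simp [pd_x₁, pd_x₂, xc]
  module

theorem bracket_sb10_𝓧₂ : L (sb 1 0) 𝓧₂ = -(((2 : S) * x₂) • 𝓧₁) := by
  rw [𝓧₂, hL.isAlmostLieBracket.sub_right, hL.bracket_sb_smul_sb, hL.bracket_sb_smul_sb]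
  simp [pd_x₁, pd_x₂, xc, 𝓧₁]
  module

theorem bracket_𝓧₁_𝓧₂ :
    L 𝓧₁ 𝓧₂ = ((2 : S) * x₁ ^ 2 * x₂) • 𝓧₁ + ((2 : S) * x₁ * x₂ ^ 2) • 𝓧₂ := by
  have hρ : anchor 𝓧₂ = 0 := by
    rw [← anchor'_𝓨₂, ← anchor_f₀]
    exact congrArg anchor f₀ₗ_𝓨₂.symm
  conv_lhs => rw [𝓧₁]
  rw [hL.isAlmostLieBracket.sub_left, hL.isAlmostLieBracket.smul_left,
    hL.isAlmostLieBracket.smul_left, hL.bracket_sb00_𝓧₂, hL.bracket_sb10_𝓧₂, hρ]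
  simp only [Derivation.zero_apply, zero_smul, sub_zero, smul_neg]
  module

end IsBracket

theorem statement9_general (L : E₀ → E₀ → E₀) (hL : IsBracket L)
    (L'' : E₀' → E₀' → E₀')
    (haddr : ∀ u v v', L'' u (v + v') = L'' u v + L'' u v')
    (hskew : ∀ u v, L'' v u = - L'' u v)
    (hleib : ∀ (f : S) (u v : E₀'), L'' u (f • v) = anchor' u f • v + f • L'' u v)
    (hgen1 : L'' Y₁₁ Y₂₂ = 0)
    (hgen2 : L'' Y₁₁ 𝓨₁ = 0)
    (hgen3 : L'' Y₂₂ 𝓨₂ = 0)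
    (hgen4 : L'' Y₁₁ 𝓨₂ = ((2 : S) * x₁) • 𝓨₂)
    (hgen5 : L'' Y₂₂ 𝓨₁ = ((2 : S) * x₂) • 𝓨₁)
    (hgen6 : L'' 𝓨₁ 𝓨₂ = ((2 : S) * x₁ ^ 2 * x₂) • 𝓨₁ + ((2 : S) * x₁ * x₂ ^ 2) • 𝓨₂) :
    (∀ u : E₀', anchor (f₀ u) = anchor' u) ∧
    (∀ u v : E₀', f₀ (L'' u v) = L (f₀ u) (f₀ v)) := by
  refine ⟨anchor_f₀, map_bracket_of_basis_of_lt hL.isAlmostLieBracket ⟨haddr, hskew, hleib⟩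
    (φ := f₀ₗ) anchor_f₀ (Pi.basisFun S (Fin 4)) fun i j hij => ?_⟩
  rw [basisFun_eq_generators]
  fin_cases i <;> fin_cases j <;>
    simp [f₀ₗ_Y₁₁, f₀ₗ_Y₂₂, f₀ₗ_𝓨₁, f₀ₗ_𝓨₂, hgen1, hgen2, hgen3, hgen4, hgen5, hgen6,
    hL.bracket_sb00_sb11, hL.bracket_sb00_𝓧₁, hL.bracket_sb11_𝓧₂, hL.bracket_sb00_𝓧₂,
    hL.bracket_sb11_𝓧₁, hL.bracket_𝓧₁_𝓧₂] at hij ⊢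

/-- `f₀` is a morphism of almost Lie algebroids over the identity of `ℝ²`:
it intertwines the anchors and the brackets.  Here `L` is the almost Lie bracket of `E₀`
and `L''` is the almost Lie bracket of `E₀'` (defined on generators and extended by
ℝ-bilinearity, skew-symmetry and the Leibniz rule w.r.t. `ρ'`). -/
theorem statement9 (L : E₀ → E₀ → E₀) (hL : IsBracket L)
    (L'' : E₀' → E₀' → E₀')
    (haddl : ∀ u u' v, L'' (u + u') v = L'' u v + L'' u' v)
    (haddr : ∀ u v v', L'' u (v + v') = L'' u v + L'' u v')
    (hsmull : ∀ (c : ℝ) (u v : E₀'), L'' (c • u) v = c • L'' u v)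
    (hsmulr : ∀ (c : ℝ) (u v : E₀'), L'' u (c • v) = c • L'' u v)
    (hskew : ∀ u v, L'' v u = - L'' u v)
    (hleib : ∀ (f : S) (u v : E₀'), L'' u (f • v) = anchor' u f • v + f • L'' u v)
    (hgen1 : L'' Y₁₁ Y₂₂ = 0)
    (hgen2 : L'' Y₁₁ 𝓨₁ = 0)
    (hgen3 : L'' Y₂₂ 𝓨₂ = 0)
    (hgen4 : L'' Y₁₁ 𝓨₂ = ((2 : S) * x₁) • 𝓨₂)
    (hgen5 : L'' Y₂₂ 𝓨₁ = ((2 : S) * x₂) • 𝓨₁)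
    (hgen6 : L'' 𝓨₁ 𝓨₂ = ((2 : S) * x₁ ^ 2 * x₂) • 𝓨₁ + ((2 : S) * x₁ * x₂ ^ 2) • 𝓨₂) :
    (∀ u : E₀', anchor (f₀ u) = anchor' u) ∧
    (∀ u v : E₀', f₀ (L'' u v) = L (f₀ u) (f₀ v)) :=
  statement9_general L hL L'' haddr hskew hleib hgen1 hgen2 hgen3 hgen4 hgen5 hgen6
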